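/- Let R be a commutative ring containing an invertible element s such that s^k − s^{−k} is invertible in R for every nonzero integer k, and write {d} := s^d − s^{−d}. Let A be an associative unital R-algebra and P : ℤ² ∖ {0} → A a function such that A is generated as an R-algebra by the elements P(x), and such that for all nonzero x, y with x + y ≠ 0 one has [P(x), P(y)] = {d(x,y)}·P(x+y) (with d(x,y) := x₁y₂ − x₂y₁), while [P(x), P(−x)] = 0 for all x. Define a total preorder ⪯ on ℤ² ∖ {0} by x ⪯ y if and only if the angle of the vector x, measured counterclockwise from the positive horizontal axis and taken in [0, 2π), is less than or equal to the corresponding angle of y. Then A is spanned as an R-module by 1 together with all products P(x₁)P(x₂)⋯P(x_n) with n ≥ 1 and x₁ ⪯ x₂ ⪯ … ⪯ x_n. -/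

import Mathlib

/-- `{d} := s^d - s^{-d}` for an invertible element `s` of a commutative ring. -/
def brace {R : Type*} [CommRing R] (s : Rˣ) (d : ℤ) : R :=
  ((s ^ d : Rˣ) : R) - ((s ^ (-d) : Rˣ) : R)

/-- The angle of a lattice vector, measured counterclockwise from the positive
horizontal axis and taken in `[0, 2π)`. -/
noncomputable def latticeAngle (x : ℤ × ℤ) : ℝ :=
  let a := Complex.arg (⟨(x.1 : ℝ), (x.2 : ℝ)⟩ : ℂ)
  if 0 ≤ a then a else a + 2 * Real.pi

/-!
Modulo products of fewer generators the generators commute: every commutator `[P x, P y]` is a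
multiple of a single generator (or zero). Hence a word in the generators and any rearrangement of
it differ by a combination of shorter words, so sorting a word by angle and inducting on its length
puts every word, and therefore all of `A`, in the span of the sorted words.
-/

lemma Submonoid.exists_list_map_prod_eq_of_mem_closure_image {M ι : Type*} [Monoid M] {f : ι → M}
    {s : Set ι} {a : M} (ha : a ∈ Submonoid.closure (f '' s)) :
    ∃ l : List ι, (∀ x ∈ l, x ∈ s) ∧ (l.map f).prod = a := by
  induction ha using Submonoid.closure_induction with
  | mem _ h =>
    obtain ⟨x, hx, rfl⟩ := h
    exact ⟨[x], by simpa using hx, by simp⟩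
  | one => exact ⟨[], by simp, by simp⟩
  | mul _ _ _ _ h₁ h₂ =>
    obtain ⟨l₁, hl₁, rfl⟩ := h₁
    obtain ⟨l₂, hl₂, rfl⟩ := h₂
    exact ⟨l₁ ++ l₂, fun x hx => (List.mem_append.1 hx).elim (hl₁ x) (hl₂ x), by simp⟩

namespace WordSpan

variable (R : Type*) {A ι : Type*} [CommRing R] [Ring A] [Algebra R A] (P : ι → A) (S : Set ι)

def shortWords (n : ℕ) : Submodule R A :=
  Submodule.span R {a | ∃ l : List ι, (∀ x ∈ l, x ∈ S) ∧ l.length < n ∧ a = (l.map P).prod}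

def sortedWords (r : ι → ι → Prop) : Submodule R A :=
  Submodule.span R {a | ∃ l : List ι, (∀ x ∈ l, x ∈ S) ∧ l.IsChain r ∧ a = (l.map P).prod}

variable {R P S}

lemma prod_mem_shortWords {l : List ι} (hl : ∀ x ∈ l, x ∈ S) {n : ℕ} (hn : l.length < n) :
    (l.map P).prod ∈ shortWords R P S n :=
  Submodule.subset_span ⟨l, hl, hn, rfl⟩

lemma mul_mem_shortWords_succ {x : ι} (hx : x ∈ S) {n : ℕ} {a : A}
    (ha : a ∈ shortWords R P S n) : P x * a ∈ shortWords R P S (n + 1) := by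
  refine (Submodule.map_span_le (LinearMap.mulLeft R (P x)) _ _).2 ?_ ⟨a, ha, rfl⟩
  rintro _ ⟨l, hl, hn, rfl⟩
  exact prod_mem_shortWords (l := x :: l) (by simpa [hx] using hl) (by simpa using hn)

lemma mul_prod_mem_shortWords {a : A} (ha : a ∈ Submodule.span R (P '' S)) {l : List ι}
    (hl : ∀ x ∈ l, x ∈ S) : a * (l.map P).prod ∈ shortWords R P S (l.length + 2) := by
  refine (Submodule.map_span_le (LinearMap.mulRight R (l.map P).prod) _ _).2 ?_ ⟨a, ha, rfl⟩
  rintro _ ⟨x, hx, rfl⟩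
  exact prod_mem_shortWords (l := x :: l) (by simpa [hx] using hl) (by simp)

lemma prod_sub_prod_mem_shortWords_of_perm
    (hcomm : ∀ x ∈ S, ∀ y ∈ S, P x * P y - P y * P x ∈ Submodule.span R (P '' S))
    {l l' : List ι} (h : l.Perm l') (hl : ∀ x ∈ l, x ∈ S) :
    (l.map P).prod - (l'.map P).prod ∈ shortWords R P S l.length := by
  induction h with
  | nil => simp
  | cons x _ ih =>
    simp only [List.forall_mem_cons] at hl
    simpa [mul_sub] using mul_mem_shortWords_succ hl.1 (ih hl.2)
  | swap x y l =>
    simp only [List.forall_mem_cons] at hl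
    have := mul_prod_mem_shortWords (hcomm y hl.1 x hl.2.1) hl.2.2
    simpa [← mul_assoc, ← sub_mul] using this
  | trans h₁ _ ih₁ ih₂ =>
    have := Submodule.add_mem _ (ih₁ hl) (h₁.length_eq ▸ ih₂ fun x hx => hl x (h₁.mem_iff.2 hx))
    simpa using this

theorem prod_mem_sortedWords {r : ι → ι → Prop} [Std.Total r] [IsTrans ι r]
    (hcomm : ∀ x ∈ S, ∀ y ∈ S, P x * P y - P y * P x ∈ Submodule.span R (P '' S))
    (l : List ι) (hl : ∀ x ∈ l, x ∈ S) : (l.map P).prod ∈ sortedWords R P S r := by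
  induction hn : l.length using Nat.strong_induction_on generalizing l with
  | _ n ih =>
  classical
  have hsort := List.perm_insertionSort r l
  have hshort : shortWords R P S n ≤ sortedWords R P S r := by
    refine Submodule.span_le.2 ?_
    rintro _ ⟨l', hl', hlen, rfl⟩
    exact ih _ hlen l' hl' rfl
  have hsorted : ((l.insertionSort r).map P).prod ∈ sortedWords R P S r :=
    Submodule.subset_span ⟨_, fun x hx => hl x (hsort.mem_iff.1 hx),
      (List.pairwise_insertionSort r l).isChain, rfl⟩
  have hdiff := hshort (hn ▸ prod_sub_prod_mem_shortWords_of_perm hcomm hsort.symm hl)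
  simpa using Submodule.add_mem _ hsorted hdiff

theorem sortedWords_eq_top {r : ι → ι → Prop} [Std.Total r] [IsTrans ι r]
    (hgen : Algebra.adjoin R (P '' S) = ⊤)
    (hcomm : ∀ x ∈ S, ∀ y ∈ S, P x * P y - P y * P x ∈ Submodule.span R (P '' S)) :
    sortedWords R P S r = ⊤ := by
  have hspan := Algebra.adjoin_eq_span R (P '' S)
  rw [hgen, Algebra.top_toSubmodule] at hspan
  rw [eq_top_iff, hspan, Submodule.span_le]
  intro a ha
  obtain ⟨l, hl, rfl⟩ := Submonoid.exists_list_map_prod_eq_of_mem_closure_image ha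
  exact prod_mem_sortedWords hcomm l hl

end WordSpan

theorem stmt_10_general {R : Type*} [CommRing R] {A : Type*} [Ring A] [Algebra R A]
    (s : Rˣ)
    (P : ℤ × ℤ → A)
    -- A is generated as an R-algebra by the P(x), x ≠ 0
    (hgen : Algebra.adjoin R (P '' {x : ℤ × ℤ | x ≠ 0}) = ⊤)
    -- the commutation relations
    (hrel : ∀ x y : ℤ × ℤ, x ≠ 0 → y ≠ 0 → x + y ≠ 0 →
      P x * P y - P y * P x = brace s (x.1 * y.2 - x.2 * y.1) • P (x + y))
    (hopp : ∀ x : ℤ × ℤ, x ≠ 0 → P x * P (-x) - P (-x) * P x = 0) :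
    Submodule.span R
      ({1} ∪ {a : A | ∃ l : List (ℤ × ℤ), l ≠ [] ∧ (∀ x ∈ l, x ≠ 0) ∧
        l.Chain' (fun x y => latticeAngle x ≤ latticeAngle y) ∧
        a = (l.map P).prod}) = ⊤ := by
  have hcomm : ∀ x ∈ {x : ℤ × ℤ | x ≠ 0}, ∀ y ∈ {x : ℤ × ℤ | x ≠ 0},
      P x * P y - P y * P x ∈ Submodule.span R (P '' {x | x ≠ 0}) := by
    intro x hx y hy
    by_cases hxy : x + y = 0
    · rw [eq_neg_of_add_eq_zero_right hxy, hopp x hx]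
      exact Submodule.zero_mem _
    · rw [hrel x y hx hy hxy]
      exact Submodule.smul_mem _ _ (Submodule.subset_span ⟨x + y, hxy, rfl⟩)
  let r : ℤ × ℤ → ℤ × ℤ → Prop := fun x y => latticeAngle x ≤ latticeAngle y
  have : Std.Total r := ⟨fun _ _ => le_total _ _⟩
  have : IsTrans (ℤ × ℤ) r := ⟨fun _ _ _ => le_trans⟩
  refine eq_top_iff.2 <|
    (WordSpan.sortedWords_eq_top (r := r) hgen hcomm).ge.trans (Submodule.span_mono ?_)
  rintro _ ⟨l, hl, hchain, rfl⟩
  rcases eq_or_ne l [] with rfl | hne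
  · exact Or.inl (by simp)
  · exact Or.inr ⟨l, hne, hl, hchain, rfl⟩

theorem stmt_10 {R : Type*} [CommRing R] {A : Type*} [Ring A] [Algebra R A]
    (s : Rˣ) (hinv : ∀ k : ℤ, k ≠ 0 → IsUnit (brace s k))
    (P : ℤ × ℤ → A)
    -- A is generated as an R-algebra by the P(x), x ≠ 0
    (hgen : Algebra.adjoin R (P '' {x : ℤ × ℤ | x ≠ 0}) = ⊤)
    -- the commutation relations
    (hrel : ∀ x y : ℤ × ℤ, x ≠ 0 → y ≠ 0 → x + y ≠ 0 →
      P x * P y - P y * P x = brace s (x.1 * y.2 - x.2 * y.1) • P (x + y))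
    (hopp : ∀ x : ℤ × ℤ, x ≠ 0 → P x * P (-x) - P (-x) * P x = 0) :
    Submodule.span R
      ({1} ∪ {a : A | ∃ l : List (ℤ × ℤ), l ≠ [] ∧ (∀ x ∈ l, x ≠ 0) ∧
        l.Chain' (fun x y => latticeAngle x ≤ latticeAngle y) ∧
        a = (l.map P).prod}) = ⊤ :=
  stmt_10_general s P hgen hrel hopp
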